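/- Let (M, g, J) be a Kähler manifold and h a symmetric J-anticommuting (1,1)-tensor field. Then h♯∂̄h = (Jh)♯∂̄(Jh), where ∂̄h = (1/2)(dh - dh(J·,J·)) and (h♯α)(X,Y) = α(hX,Y) + α(X,hY). -/
import Mathlib


open scoped RealInnerProductSpace

def dF {V : Type*} [AddCommGroup V] [Module ℝ V]
    (Dh : V → (V →ₗ[ℝ] V)) (X Y : V) : V := Dh X Y - Dh Y X

/-- ∂̄h := (1/2)(dh - dh(J·, J·)). -/
noncomputable def delB {V : Type*} [AddCommGroup V] [Module ℝ V]
    (J : V →ₗ[ℝ] V) (Dh : V → (V →ₗ[ℝ] V)) (X Y : V) : V :=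
  (2:ℝ)⁻¹ • (dF Dh X Y - dF Dh (J X) (J Y))

/-- for a symmetric J-anticommuting h on a Kähler manifold
(∇J = 0, so ∇(Jh) = J∘∇h), one has h♯∂̄h = (Jh)♯∂̄(Jh). -/
theorem stmt11 {V : Type*} [NormedAddCommGroup V] [InnerProductSpace ℝ V]
    (J h : V →ₗ[ℝ] V) (Dh : V → (V →ₗ[ℝ] V))
    (hJ2 : ∀ x : V, J (J x) = -x)
    (hJorth : ∀ x y : V, ⟪J x, J y⟫ = ⟪x, y⟫)
    (hsym : ∀ x y : V, ⟪h x, y⟫ = ⟪x, h y⟫)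
    (hanti : h ∘ₗ J = -(J ∘ₗ h))
    (hDadd : ∀ X Y : V, Dh (X + Y) = Dh X + Dh Y)
    (hDsmul : ∀ (c : ℝ) (X : V), Dh (c • X) = c • Dh X)
    (hDanti : ∀ X : V, Dh X ∘ₗ J = -(J ∘ₗ Dh X)) :
    ∀ X Y : V,
      delB J Dh (h X) Y + delB J Dh X (h Y)
        = delB J (fun Z => J ∘ₗ Dh Z) ((J ∘ₗ h) X) Y
            + delB J (fun Z => J ∘ₗ Dh Z) X ((J ∘ₗ h) Y) := by
  have hJh : ∀ x : V, h (J x) = -J (h x) := by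
    intro x
    have := congrFun (congrArg DFunLike.coe hanti) x
    simpa [LinearMap.comp_apply] using this
  have hDneg : ∀ x : V, Dh (-x) = -Dh x := by
    intro x
    have := hDsmul (-1) x
    simpa [neg_one_smul] using this
  have hDJ : ∀ x y : V, Dh x (J y) = -J (Dh x y) := by
    intro x y
    have := congrFun (congrArg DFunLike.coe (hDanti x)) y
    simpa [LinearMap.comp_apply] using this
  intro X Y
  simp only [delB, dF, LinearMap.comp_apply]
  rw [← smul_add, ← smul_add]
  congr 1
  simp only [hJh, hDneg, hDJ, hJ2, map_neg, LinearMap.neg_apply, neg_neg]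
  abel
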